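/- Every tournament on n ≥ 1 vertices contains a transitive subtournament on at least ⌊log₂ n⌋ + 1 vertices. -/
import Mathlib

section Aux

variable {V : Type} [DecidableEq V] (r : V → V → Prop)

lemma tour_no_cycle_insert_out (hirr : ∀ v, ¬ r v v)
    (htour : ∀ u v : V, u ≠ v → Xor' (r u v) (r v u))
    (v : V) (S' : Finset V) (hv : v ∉ S') (hout : ∀ u ∈ S', r v u)
    (hS' : ¬ ∃ (m : ℕ) (c : Fin (m + 1) → V), (∀ i, c i ∈ S') ∧
        Function.Injective c ∧ ∀ i : Fin (m + 1), r (c i) (c (i + 1))) :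
    ¬ ∃ (m : ℕ) (c : Fin (m + 1) → V), (∀ i, c i ∈ insert v S') ∧
        Function.Injective c ∧ ∀ i : Fin (m + 1), r (c i) (c (i + 1)) := by
  rintro ⟨m, c, hmem, hinj, hcyc⟩
  by_cases hall : ∀ i, c i ∈ S'
  · exact hS' ⟨m, c, hall, hinj, hcyc⟩
  · push_neg at hall
    obtain ⟨i, hi⟩ := hall
    have hcv : c i = v := by
      rcases Finset.mem_insert.1 (hmem i) with h | h
      · exact h
      · exact absurd h hi
    have hedge := hcyc (i - 1)
    rw [sub_add_cancel, hcv] at hedge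
    rcases Finset.mem_insert.1 (hmem (i - 1)) with h | h
    · rw [h] at hedge; exact hirr v hedge
    · have h1 : r v (c (i - 1)) := hout _ h
      have hne : c (i - 1) ≠ v := fun e => hv (e ▸ h)
      rcases htour _ _ hne with ⟨_, hb⟩ | ⟨_, hb⟩
      · exact hb h1
      · exact hb hedge

lemma tour_no_cycle_insert_in (hirr : ∀ v, ¬ r v v)
    (htour : ∀ u v : V, u ≠ v → Xor' (r u v) (r v u))
    (v : V) (S' : Finset V) (hv : v ∉ S') (hin : ∀ u ∈ S', r u v)
    (hS' : ¬ ∃ (m : ℕ) (c : Fin (m + 1) → V), (∀ i, c i ∈ S') ∧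
        Function.Injective c ∧ ∀ i : Fin (m + 1), r (c i) (c (i + 1))) :
    ¬ ∃ (m : ℕ) (c : Fin (m + 1) → V), (∀ i, c i ∈ insert v S') ∧
        Function.Injective c ∧ ∀ i : Fin (m + 1), r (c i) (c (i + 1)) := by
  rintro ⟨m, c, hmem, hinj, hcyc⟩
  by_cases hall : ∀ i, c i ∈ S'
  · exact hS' ⟨m, c, hall, hinj, hcyc⟩
  · push_neg at hall
    obtain ⟨i, hi⟩ := hall
    have hcv : c i = v := by
      rcases Finset.mem_insert.1 (hmem i) with h | h
      · exact h
      · exact absurd h hi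
    have hedge := hcyc i
    rw [hcv] at hedge
    rcases Finset.mem_insert.1 (hmem (i + 1)) with h | h
    · rw [h] at hedge; exact hirr v hedge
    · have h1 : r (c (i + 1)) v := hin _ h
      have hne : c (i + 1) ≠ v := fun e => hv (e ▸ h)
      rcases htour (c (i + 1)) v hne with ⟨_, hb⟩ | ⟨hb', hb⟩
      · exact hb hedge
      · exact hb h1

lemma tour_key (hirr : ∀ v, ¬ r v v)
    (htour : ∀ u v : V, u ≠ v → Xor' (r u v) (r v u)) :
    ∀ n (T : Finset V), T.card = n → 1 ≤ n →
      ∃ S : Finset V, S ⊆ T ∧ Nat.log 2 n + 1 ≤ S.card ∧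
        ¬ ∃ (m : ℕ) (c : Fin (m + 1) → V), (∀ i, c i ∈ S) ∧
            Function.Injective c ∧ ∀ i : Fin (m + 1), r (c i) (c (i + 1)) := by
  intro n
  induction n using Nat.strong_induction_on with
  | _ n ih =>
    intro T hcard hn
    classical
    obtain ⟨v, hv⟩ := Finset.card_pos.mp (by omega : 0 < T.card)
    by_cases h1 : n = 1
    · refine ⟨{v}, Finset.singleton_subset_iff.mpr hv, by simp [h1], ?_⟩
      rintro ⟨m, c, hmem, -, hcyc⟩
      have h0 : c 0 = v := Finset.mem_singleton.1 (hmem 0)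
      have h0' : c (0 + 1) = v := Finset.mem_singleton.1 (hmem _)
      have := hcyc 0
      rw [h0, h0'] at this
      exact hirr v this
    · have hn2 : 2 ≤ n := by omega
      set A := (T.erase v).filter (fun u => r v u) with hA
      set B := (T.erase v).filter (fun u => ¬ r v u) with hB
      have hABcard : A.card + B.card = n - 1 := by
        rw [hA, hB, Finset.card_filter_add_card_filter_not,
          Finset.card_erase_of_mem hv, hcard]
      have hAr : ∀ u ∈ A, r v u := by
        intro u hu
        simp only [hA, Finset.mem_filter] at hu
        exact hu.2
      have hBr : ∀ u ∈ B, r u v := by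
        intro u hu
        simp only [hB, Finset.mem_filter, Finset.mem_erase] at hu
        rcases htour u v hu.1.1 with ⟨ha, _⟩ | ⟨hb, _⟩
        · exact ha
        · exact absurd hb hu.2
      have hlogpos : 0 < Nat.log 2 n := Nat.log_pos (by norm_num) hn2
      have hlogdiv : Nat.log 2 (n / 2) = Nat.log 2 n - 1 := Nat.log_div_base 2 n
      -- choose the larger of A, B as W
      by_cases hWc : B.card ≤ A.card
      · -- use A
        have hk : n / 2 ≤ A.card := by omega
        have hk1 : 1 ≤ A.card := by omega
        have hklt : A.card < n := by omega
        obtain ⟨S', hS'sub, hS'card, hS'acyc⟩ := ih A.card hklt A rfl hk1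
        have hvS' : v ∉ S' := by
          intro hvs
          have := hS'sub hvs
          simp only [hA, Finset.mem_filter, Finset.mem_erase] at this
          exact this.1.1 rfl
        refine ⟨insert v S', ?_, ?_, ?_⟩
        · intro x hx
          rcases Finset.mem_insert.1 hx with h | h
          · exact h ▸ hv
          · exact Finset.mem_of_mem_erase (Finset.mem_of_mem_filter x (hS'sub h))
        · rw [Finset.card_insert_of_notMem hvS']
          have hmono : Nat.log 2 (n / 2) ≤ Nat.log 2 A.card := Nat.log_mono_right hk
          omega
        · exact tour_no_cycle_insert_out r hirr htour v S' hvS'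
            (fun u hu => hAr u (hS'sub hu)) hS'acyc
      · -- use B
        have hk : n / 2 ≤ B.card := by omega
        have hk1 : 1 ≤ B.card := by omega
        have hklt : B.card < n := by omega
        obtain ⟨S', hS'sub, hS'card, hS'acyc⟩ := ih B.card hklt B rfl hk1
        have hvS' : v ∉ S' := by
          intro hvs
          have := hS'sub hvs
          simp only [hB, Finset.mem_filter, Finset.mem_erase] at this
          exact this.1.1 rfl
        refine ⟨insert v S', ?_, ?_, ?_⟩
        · intro x hx
          rcases Finset.mem_insert.1 hx with h | h
          · exact h ▸ hv
          · exact Finset.mem_of_mem_erase (Finset.mem_of_mem_filter x (hS'sub h))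
        · rw [Finset.card_insert_of_notMem hvS']
          have hmono : Nat.log 2 (n / 2) ≤ Nat.log 2 B.card := Nat.log_mono_right hk
          omega
        · exact tour_no_cycle_insert_in r hirr htour v S' hvS'
            (fun u hu => hBr u (hS'sub hu)) hS'acyc

end Aux

/-- Every tournament on `n ≥ 1` vertices contains a transitive
subtournament on at least `⌊log₂ n⌋ + 1` vertices. -/
theorem tournament_large_transitive_subtournament (V : Type) [Fintype V]
    (hn : 1 ≤ Fintype.card V)
    (r : V → V → Prop)
    (hirr : ∀ v, ¬ r v v)
    (htour : ∀ u v : V, u ≠ v → Xor' (r u v) (r v u)) :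
    ∃ S : Finset V, Nat.log 2 (Fintype.card V) + 1 ≤ S.card ∧
      ¬ ∃ (m : ℕ) (c : Fin (m + 1) → V), (∀ i, c i ∈ S) ∧
          Function.Injective c ∧ ∀ i : Fin (m + 1), r (c i) (c (i + 1)) := by
  classical
  obtain ⟨S, -, hScard, hSacyc⟩ :=
    tour_key r hirr htour (Fintype.card V) Finset.univ (Finset.card_univ) hn
  exact ⟨S, hScard, hSacyc⟩
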